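/- Let A ∈ ℝ^{n×n}, δ ≥ 0, and let U = Z(c_u; g_u^(1),…,g_u^(q)) be a zonotope in ℝ^n. For a vector w ∈ ℝ^n let Ã(w) ∈ ℝ^{(n+1)×(n+1)} denote the augmented matrix with upper-left block A, last column whose first n entries are w, and zero last row; let x̃₀ = e_{n+1} and P = [I_n 0] ∈ ℝ^{n×(n+1)}. Suppose that for each w ∈ {c_u, g_u^(1),…,g_u^(q)} there are Ṽ_w ∈ ℝ^{(n+1)×ξ}, H̃_w ∈ ℝ^{ξ×ξ}, and ε̃_w ≥ 0 with ‖exp(Ã(w) δ) x̃₀ − Ṽ_w exp(H̃_w δ) e₁‖ ≤ ε̃_w δ. Set c̃ = P Ṽ_{c_u} exp(H̃_{c_u} δ) e₁, g̃^(i) = P Ṽ_{g_u^(i)} exp(H̃_{g_u^(i)} δ) e₁, and r = (ε̃_{c_u} + Σ_{i=1}^q ε̃_{g_u^(i)}) δ. Then { (∫_0^δ exp(A t) dt) u : u ∈ U } ⊆ Z(c̃; g̃^(1),…,g̃^(q)) + { y ∈ ℝ^n : |y_j| ≤ r for all j }. -/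

import Mathlib

/-!
The augmented matrix `Ã(w)` sends `e_{n+1}` to `(w, 0)` and acts as `A` on `ℝⁿ × {0}`, so
`exp(t Ã(w))` intertwines with `exp(t A)` there. Hence `t ↦ P exp(t Ã(w)) e_{n+1}` has derivative
`exp(t A) w` and vanishes at `0`, and the fundamental theorem of calculus gives
`P exp(δ Ã(w)) e_{n+1} = (∫_0^δ exp(A t) dt) w`. The image of `U` is therefore the zonotope with
these vectors as center and generators; replacing each by its Krylov approximation moves a point
`c + Σ βᵢ gᵢ` by at most `ε̃_c δ + Σ |βᵢ| ε̃ᵢ δ ≤ r` in every coordinate.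
-/

open Matrix Set Pointwise

/-- Matrix exponential of a real square matrix. -/
noncomputable def mexp {m : ℕ} (A : Matrix (Fin m) (Fin m) ℝ) : Matrix (Fin m) (Fin m) ℝ :=
  NormedSpace.exp A

/-- Euclidean norm of a vector in `ℝ^m`. -/
noncomputable def euclNorm {m : ℕ} (x : Fin m → ℝ) : ℝ :=
  ‖(show EuclideanSpace ℝ (Fin m) from WithLp.toLp 2 x)‖

/-- First standard basis vector of `ℝ^ξ`. -/
noncomputable def e1 {ξ : ℕ} [NeZero ξ] : Fin ξ → ℝ := Pi.single 0 1

/-- The augmented matrix `Ã(w) = [[A, w], [0, 0]]`. -/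
def aug {n : ℕ} (A : Matrix (Fin n) (Fin n) ℝ) (w : Fin n → ℝ) :
    Matrix (Fin (n + 1)) (Fin (n + 1)) ℝ :=
  Matrix.of fun i j =>
    Fin.lastCases 0 (fun i' => Fin.lastCases (w i') (fun j' => A i' j') j) i

/-- The entrywise integral `∫_0^t exp(A s) ds`. -/
noncomputable def intExp {n : ℕ} (A : Matrix (Fin n) (Fin n) ℝ) (t : ℝ) :
    Matrix (Fin n) (Fin n) ℝ :=
  Matrix.of fun i j => ∫ s in (0 : ℝ)..t, mexp (s • A) i j

/-- Projection `P = [I 0]` onto the first `n` coordinates. -/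
def proj {n : ℕ} (x : Fin (n + 1) → ℝ) : Fin n → ℝ := fun i => x i.castSucc

/-- The zonotope with center `c` and generators `g i`. -/
def zonotope {n : ℕ} {ι : Type*} [Fintype ι] (c : Fin n → ℝ) (g : ι → Fin n → ℝ) :
    Set (Fin n → ℝ) :=
  {x | ∃ β : ι → ℝ, (∀ i, β i ∈ Set.Icc (-1 : ℝ) 1) ∧ x = c + ∑ i, β i • g i}

open NormedSpace MeasureTheory

section

-- The `L∞` operator norm induces the product topology on matrices, with respect to which `mexp`
-- is defined, so the exponential lemmas for normed algebras apply to `mexp`.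
attribute [local instance] Matrix.linftyOpNormedRing Matrix.linftyOpNormedAlgebra

theorem mexp_mul_eq_mul_mexp {m k : ℕ} {M : Matrix (Fin m) (Fin m) ℝ}
    {N : Matrix (Fin k) (Fin k) ℝ} {E : Matrix (Fin m) (Fin k) ℝ} (h : M * E = E * N) :
    mexp M * E = E * mexp N := by
  have hpow (j : ℕ) : M ^ j * E = E * N ^ j := by
    induction j with
    | zero => simp
    | succ j ih => rw [pow_succ, Matrix.mul_assoc, h, ← Matrix.mul_assoc, ih, Matrix.mul_assoc,
        ← pow_succ]
  have hM := (exp_series_hasSum_exp' (𝕂 := ℝ) M).map (mulRightLinearMap (Fin m) ℝ E)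
    (LinearMap.continuous_of_finiteDimensional _)
  have hN := (exp_series_hasSum_exp' (𝕂 := ℝ) N).map (mulLeftLinearMap (Fin k) ℝ E)
    (LinearMap.continuous_of_finiteDimensional _)
  refine hM.unique (hN.congr_fun fun j => ?_)
  simp [hpow]

theorem continuous_mexp_smul {m : ℕ} (M : Matrix (Fin m) (Fin m) ℝ) :
    Continuous fun s : ℝ => mexp (s • M) :=
  exp_continuous.comp (continuous_id.smul continuous_const)

theorem hasDerivAt_mexp_smul_mulVec {m : ℕ} (M : Matrix (Fin m) (Fin m) ℝ) (v : Fin m → ℝ)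
    (t : ℝ) : HasDerivAt (fun s : ℝ => mexp (s • M) *ᵥ v) (mexp (t • M) *ᵥ (M *ᵥ v)) t := by
  let L : Matrix (Fin m) (Fin m) ℝ →L[ℝ] (Fin m → ℝ) :=
    LinearMap.toContinuousLinearMap ((LinearMap.applyₗ v).comp Matrix.toLin'.toLinearMap)
  rw [Matrix.mulVec_mulVec]
  exact L.hasFDerivAt.comp_hasDerivAt t (hasDerivAt_exp_smul_const (𝕂 := ℝ) M t)

end

theorem intExp_mulVec {n : ℕ} (A : Matrix (Fin n) (Fin n) ℝ) (t : ℝ) (w : Fin n → ℝ) :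
    intExp A t *ᵥ w = ∫ s in (0 : ℝ)..t, mexp (s • A) *ᵥ w := by
  have hcont : Continuous fun s : ℝ => mexp (s • A) *ᵥ w :=
    (continuous_mexp_smul A).matrix_mulVec continuous_const
  funext j
  have h := (ContinuousLinearMap.proj (R := ℝ) (φ := fun _ : Fin n => ℝ) j)
    |>.intervalIntegral_comp_comm (hcont.intervalIntegrable (μ := volume) 0 t)
  simp only [ContinuousLinearMap.proj_apply] at h
  rw [← h]
  simp only [intExp, Matrix.mulVec, dotProduct, Matrix.of_apply]
  rw [intervalIntegral.integral_finsetSum]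
  · simp only [intervalIntegral.integral_mul_const]
  · intro i _
    have hij : Continuous fun s : ℝ => mexp (s • A) j i :=
      (continuous_apply_apply j i).comp (continuous_mexp_smul A)
    exact (hij.mul continuous_const).intervalIntegrable _ _

def castSuccMatrix (n : ℕ) : Matrix (Fin (n + 1)) (Fin n) ℝ :=
  Matrix.of fun i j => if i = j.castSucc then 1 else 0

theorem castSuccMatrix_mulVec {n : ℕ} (v : Fin n → ℝ) :
    castSuccMatrix n *ᵥ v = Fin.snoc v 0 := by
  funext i
  induction i using Fin.lastCases with
  | last => simp [castSuccMatrix, Matrix.mulVec, dotProduct, (Fin.castSucc_lt_last _).ne']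
  | cast i => simp [castSuccMatrix, Matrix.mulVec, dotProduct]

theorem aug_mul_castSuccMatrix {n : ℕ} (A : Matrix (Fin n) (Fin n) ℝ) (w : Fin n → ℝ) :
    aug A w * castSuccMatrix n = castSuccMatrix n * A := by
  ext i j
  induction i using Fin.lastCases with
  | last => simp [castSuccMatrix, aug, Matrix.mul_apply, (Fin.castSucc_lt_last _).ne']
  | cast i => simp [castSuccMatrix, aug, Matrix.mul_apply]

theorem mexp_smul_aug_mulVec_snoc_zero {n : ℕ} (A : Matrix (Fin n) (Fin n) ℝ) (w v : Fin n → ℝ)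
    (t : ℝ) : mexp (t • aug A w) *ᵥ Fin.snoc v 0 = Fin.snoc (mexp (t • A) *ᵥ v) 0 := by
  have h : (t • aug A w) * castSuccMatrix n = castSuccMatrix n * (t • A) := by
    rw [Matrix.smul_mul, aug_mul_castSuccMatrix, Matrix.mul_smul]
  rw [← castSuccMatrix_mulVec, mulVec_mulVec, mexp_mul_eq_mul_mexp h, ← mulVec_mulVec,
    castSuccMatrix_mulVec]

theorem aug_mulVec_single_last {n : ℕ} (A : Matrix (Fin n) (Fin n) ℝ) (w : Fin n → ℝ) :
    aug A w *ᵥ Pi.single (Fin.last n) 1 = Fin.snoc w 0 := by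
  funext i
  induction i using Fin.lastCases with
  | last => simp [aug]
  | cast i => simp [aug]

theorem proj_snoc {n : ℕ} (x : Fin n → ℝ) (a : ℝ) : proj (Fin.snoc x a) = x := by
  funext i
  simp [proj]

theorem intExp_mulVec_eq_proj_mexp_aug {n : ℕ} (A : Matrix (Fin n) (Fin n) ℝ) (w : Fin n → ℝ)
    (t : ℝ) : intExp A t *ᵥ w = proj (mexp (t • aug A w) *ᵥ Pi.single (Fin.last n) 1) := by
  have hderiv (s : ℝ) :
      HasDerivAt (fun s => proj (mexp (s • aug A w) *ᵥ Pi.single (Fin.last n) 1))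
        (mexp (s • A) *ᵥ w) s := by
    have h := hasDerivAt_mexp_smul_mulVec (aug A w) (Pi.single (Fin.last n) 1) s
    rw [aug_mulVec_single_last, mexp_smul_aug_mulVec_snoc_zero] at h
    rw [← proj_snoc (mexp (s • A) *ᵥ w) 0]
    exact hasDerivAt_pi.2 fun j => hasDerivAt_pi.1 h j.castSucc
  rw [intExp_mulVec, intervalIntegral.integral_eq_sub_of_hasDerivAt (fun s _ => hderiv s)
    (((continuous_mexp_smul A).matrix_mulVec continuous_const).intervalIntegrable _ _)]
  funext j
  simp [mexp, proj, (Fin.castSucc_lt_last j).ne]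

theorem abs_apply_le_euclNorm {m : ℕ} (x : Fin m → ℝ) (j : Fin m) : |x j| ≤ euclNorm x :=
  PiLp.norm_apply_le (WithLp.toLp 2 x) j

theorem mulVec_image_zonotope {m n : ℕ} {ι : Type*} [Fintype ι] (M : Matrix (Fin m) (Fin n) ℝ)
    (c : Fin n → ℝ) (g : ι → Fin n → ℝ) :
    (M *ᵥ ·) '' zonotope c g = zonotope (M *ᵥ c) (fun i => M *ᵥ g i) := by
  have hM (β : ι → ℝ) : M *ᵥ (c + ∑ i, β i • g i) = M *ᵥ c + ∑ i, β i • M *ᵥ g i := by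
    simp [Matrix.mulVec_add, Matrix.mulVec_sum, Matrix.mulVec_smul]
  ext x
  constructor
  · rintro ⟨_, ⟨β, hβ, rfl⟩, rfl⟩
    exact ⟨β, hβ, hM β⟩
  · rintro ⟨β, hβ, rfl⟩
    exact ⟨_, ⟨β, hβ, rfl⟩, hM β⟩

theorem zonotope_subset_add_box {n : ℕ} {ι : Type*} [Fintype ι] {c c' : Fin n → ℝ}
    {g g' : ι → Fin n → ℝ} {a r : ℝ} {b : ι → ℝ} (hc : ∀ j, |c j - c' j| ≤ a)
    (hg : ∀ i j, |g i j - g' i j| ≤ b i) (hr : a + ∑ i, b i ≤ r) :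
    zonotope c g ⊆ zonotope c' g' + {y | ∀ j, |y j| ≤ r} := by
  rintro _ ⟨β, hβ, rfl⟩
  refine ⟨c' + ∑ i, β i • g' i, ⟨β, hβ, rfl⟩, (c - c') + ∑ i, β i • (g i - g' i), fun j => ?_,
    by simp only [smul_sub, Finset.sum_sub_distrib]; abel⟩
  have hβg (i : ι) : |β i * (g i j - g' i j)| ≤ b i := by
    rw [abs_mul]
    exact (mul_le_of_le_one_left (abs_nonneg _) (abs_le.2 (hβ i))).trans (hg i j)
  calc |((c - c') + ∑ i, β i • (g i - g' i)) j|
      = |(c j - c' j) + ∑ i, β i * (g i j - g' i j)| := by simp [Finset.sum_apply]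
    _ ≤ |c j - c' j| + ∑ i, |β i * (g i j - g' i j)| :=
        (abs_add_le _ _).trans (add_le_add_right (Finset.abs_sum_le_sum_abs _ _) _)
    _ ≤ a + ∑ i, b i := add_le_add (hc j) (Finset.sum_le_sum fun i _ => hβg i)
    _ ≤ r := hr

theorem stmt14_general {n ξ q : ℕ} [NeZero ξ]
    (A : Matrix (Fin n) (Fin n) ℝ) (δ : ℝ)
    (cu : Fin n → ℝ) (gu : Fin q → Fin n → ℝ)
    (Vc : Matrix (Fin (n + 1)) (Fin ξ) ℝ) (Hc : Matrix (Fin ξ) (Fin ξ) ℝ) (εc : ℝ)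
    (Vg : Fin q → Matrix (Fin (n + 1)) (Fin ξ) ℝ)
    (Hg : Fin q → Matrix (Fin ξ) (Fin ξ) ℝ) (εg : Fin q → ℝ)
    (hc : euclNorm (mexp (δ • aug A cu) *ᵥ Pi.single (Fin.last n) 1
          - Vc *ᵥ (mexp (δ • Hc) *ᵥ e1)) ≤ εc * δ)
    (hg : ∀ i, euclNorm (mexp (δ • aug A (gu i)) *ᵥ Pi.single (Fin.last n) 1
          - Vg i *ᵥ (mexp (δ • Hg i) *ᵥ e1)) ≤ εg i * δ) :
    (fun u => intExp A δ *ᵥ u) '' zonotope cu gu ⊆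
      zonotope (proj (Vc *ᵥ (mexp (δ • Hc) *ᵥ e1)))
          (fun i => proj (Vg i *ᵥ (mexp (δ • Hg i) *ᵥ e1)))
        + {y : Fin n → ℝ | ∀ j, |y j| ≤ (εc + ∑ i, εg i) * δ} := by
  rw [mulVec_image_zonotope]
  refine zonotope_subset_add_box (a := εc * δ) (b := fun i => εg i * δ) (fun j => ?_)
    (fun i j => ?_) (by rw [add_mul, Finset.sum_mul])
  · rw [intExp_mulVec_eq_proj_mexp_aug]
    exact (abs_apply_le_euclNorm _ j.castSucc).trans hc
  · rw [intExp_mulVec_eq_proj_mexp_aug]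
    exact (abs_apply_le_euclNorm _ j.castSucc).trans (hg i)

/-- Reachable set for constant, uncertain inputs: the image of the
input zonotope `U` under `u ↦ (∫_0^δ exp(A t) dt) u` is contained in the Krylov zonotope
`Z(c̃; g̃)` plus the error box of radius `(ε̃_c + Σᵢ ε̃ᵢ) δ`. -/
theorem stmt14 {n ξ q : ℕ} [NeZero ξ]
    (A : Matrix (Fin n) (Fin n) ℝ) (δ : ℝ) (hδ : 0 ≤ δ)
    (cu : Fin n → ℝ) (gu : Fin q → Fin n → ℝ)
    (Vc : Matrix (Fin (n + 1)) (Fin ξ) ℝ) (Hc : Matrix (Fin ξ) (Fin ξ) ℝ) (εc : ℝ)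
    (Vg : Fin q → Matrix (Fin (n + 1)) (Fin ξ) ℝ)
    (Hg : Fin q → Matrix (Fin ξ) (Fin ξ) ℝ) (εg : Fin q → ℝ)
    (hεc : 0 ≤ εc) (hεg : ∀ i, 0 ≤ εg i)
    (hc : euclNorm (mexp (δ • aug A cu) *ᵥ Pi.single (Fin.last n) 1
          - Vc *ᵥ (mexp (δ • Hc) *ᵥ e1)) ≤ εc * δ)
    (hg : ∀ i, euclNorm (mexp (δ • aug A (gu i)) *ᵥ Pi.single (Fin.last n) 1
          - Vg i *ᵥ (mexp (δ • Hg i) *ᵥ e1)) ≤ εg i * δ) :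
    (fun u => intExp A δ *ᵥ u) '' zonotope cu gu ⊆
      zonotope (proj (Vc *ᵥ (mexp (δ • Hc) *ᵥ e1)))
          (fun i => proj (Vg i *ᵥ (mexp (δ • Hg i) *ᵥ e1)))
        + {y : Fin n → ℝ | ∀ j, |y j| ≤ (εc + ∑ i, εg i) * δ} :=
  stmt14_general A δ cu gu Vc Hc εc Vg Hg εg hc hg
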